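/- arXiv:0911.2818 — 3 statements merged into one kernel-verified Lean document; each statement's English description precedes it below -/
import Mathlib

section
/- Define ℚ_0 = ℙ_0 and, for n ≥ 1, ℚ_n(x) = ℙ_n(x) − 𝖯_n(ξ) (I_N + Λ 𝐊_{n−1})^{−1} Λ 𝕂_{n−1}(ξ, x). Then every entry of ℚ_n − ℙ_n lies in Π_{n−1}^d (so the entries of ℚ_n are polynomials of degree n with the same leading terms as those of ℙ_n), and every entry of ℚ_n is ⟨·,·⟩_ν-orthogonal to Π_{n−1}^d, i.e. ⟨(ℚ_n)_k, q⟩_ν = 0 for every q ∈ Π_{n−1}^d and every index k. Hence {ℚ_n}_{n≥0} is an orthogonal polynomial system for ⟨·,·⟩_ν. -/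
open MeasureTheory MvPolynomial Matrix Finset

noncomputable section

/-- The space `Π_{n-1}^d` of real polynomials in `d` variables of total degree `< n`
(interpreted as the zero space for `n = 0`). -/
def piDegLT (d : ℕ) : ℕ → Submodule ℝ (MvPolynomial (Fin d) ℝ)
  | 0 => ⊥
  | n + 1 => MvPolynomial.restrictTotalDegree (Fin d) ℝ n

/-- The inner product `⟨p, q⟩_μ = ∫ p q dμ`. -/
def muInner {d : ℕ} (μ : Measure (Fin d → ℝ)) (p q : MvPolynomial (Fin d) ℝ) : ℝ :=
  ∫ x, eval x p * eval x q ∂μ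

/-- The inner product `⟨p, q⟩_ν = ⟨p, q⟩_μ + 𝐩(ξ)^T Λ 𝐪(ξ)`. -/
def nuInner {d N : ℕ} (μ : Measure (Fin d → ℝ)) (ξ : Fin N → (Fin d → ℝ))
    (Λ : Matrix (Fin N) (Fin N) ℝ) (p q : MvPolynomial (Fin d) ℝ) : ℝ :=
  muInner μ p q + (fun i => eval (ξ i) p) ⬝ᵥ Λ.mulVec (fun i => eval (ξ i) q)

/-- The reproducing kernel `K_n(dμ; x, y) = Σ_{j=0}^n ℙ_j(x)^T ℙ_j(y)` of `Π_n^d`. -/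
def Kmu {d : ℕ} (r : ℕ → ℕ) (P : (n : ℕ) → Fin (r n) → MvPolynomial (Fin d) ℝ)
    (n : ℕ) (x y : Fin d → ℝ) : ℝ :=
  ∑ j ∈ Finset.range (n + 1), ∑ k : Fin (r j), eval x (P j k) * eval y (P j k)

/-- `K_n(dμ; x, ·)` as a polynomial (in the second variable). -/
def kerPoly {d : ℕ} (r : ℕ → ℕ) (P : (n : ℕ) → Fin (r n) → MvPolynomial (Fin d) ℝ)
    (n : ℕ) (x : Fin d → ℝ) : MvPolynomial (Fin d) ℝ :=
  ∑ j ∈ Finset.range (n + 1), ∑ k : Fin (r j), (eval x (P j k)) • P j k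

/-- `K_{n-1}(dμ; x, ·)` as a polynomial, with the convention `K_{-1} = 0`. -/
def kerPolyM1 {d : ℕ} (r : ℕ → ℕ) (P : (n : ℕ) → Fin (r n) → MvPolynomial (Fin d) ℝ) :
    ℕ → (Fin d → ℝ) → MvPolynomial (Fin d) ℝ
  | 0, _ => 0
  | n + 1, x => kerPoly r P n x

/-- The matrix `𝐊_n = (K_n(dμ; ξ_i, ξ_j))_{i,j=1}^N`. -/
def bigK {d N : ℕ} (r : ℕ → ℕ) (P : (n : ℕ) → Fin (r n) → MvPolynomial (Fin d) ℝ)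
    (ξ : Fin N → (Fin d → ℝ)) (n : ℕ) : Matrix (Fin N) (Fin N) ℝ :=
  Matrix.of fun i j => Kmu r P n (ξ i) (ξ j)

/-- The matrix `𝐊_{n-1}`, with the convention `𝐊_{-1} = 0`. -/
def bigKm1 {d N : ℕ} (r : ℕ → ℕ) (P : (n : ℕ) → Fin (r n) → MvPolynomial (Fin d) ℝ)
    (ξ : Fin N → (Fin d → ℝ)) : ℕ → Matrix (Fin N) (Fin N) ℝ
  | 0 => 0
  | n + 1 => bigK r P ξ n

/-- The matrix `𝖯_n(ξ)` with columns `ℙ_n(ξ_1), …, ℙ_n(ξ_N)`. -/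
def Pmat {d N : ℕ} (r : ℕ → ℕ) (P : (n : ℕ) → Fin (r n) → MvPolynomial (Fin d) ℝ)
    (ξ : Fin N → (Fin d → ℝ)) (n : ℕ) : Matrix (Fin (r n)) (Fin N) ℝ :=
  Matrix.of fun k i => eval (ξ i) (P n k)

/-- `ℚ_n(x) = ℙ_n(x) − 𝖯_n(ξ) (I_N + Λ 𝐊_{n−1})^{−1} Λ 𝕂_{n−1}(ξ, x)`, entrywise, as
polynomials (for `n = 0` this reduces to `ℚ_0 = ℙ_0`). -/
def Qpoly {d N : ℕ} (r : ℕ → ℕ) (P : (n : ℕ) → Fin (r n) → MvPolynomial (Fin d) ℝ)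
    (ξ : Fin N → (Fin d → ℝ)) (Λ : Matrix (Fin N) (Fin N) ℝ)
    (n : ℕ) (k : Fin (r n)) : MvPolynomial (Fin d) ℝ :=
  P n k - ∑ i : Fin N,
    ((Pmat r P ξ n * (1 + Λ * bigKm1 r P ξ n)⁻¹ * Λ) k i) • kerPolyM1 r P n (ξ i)

/-!
For `q ∈ Π_{n-1}^d` the reproducing property gives `⟨K_{n-1}(dμ; ξ_i, ·), q⟩_μ = q(ξ_i)`, so for
every coefficient matrix `M` the polynomials `ℙ_n − M 𝕂_{n−1}(ξ, ·)` differ from `ℙ_n` by an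
element of `Π_{n-1}^d` and satisfy `⟨ℙ_n − M 𝕂_{n−1}(ξ, ·), q⟩_ν = ((𝖯_n − M 𝐊_{n−1}) Λ − M) 𝐪(ξ)`.
For `M = 𝖯_n (I_N + Λ 𝐊_{n−1})⁻¹ Λ` the push-through identity makes this matrix vanish; the
inverse is a genuine one because `I_N + Λ 𝐊_{n−1} = Λ (Λ⁻¹ + 𝐊_{n−1})` with `𝐊_{n−1}` a Gram
matrix, hence positive semidefinite.
-/

section MatrixIdentities

variable {n : Type*} [Fintype n] [DecidableEq n]

theorem Matrix.isUnit_one_add_mul_of_posDef_of_posSemidef {𝕜 : Type*} [Field 𝕜] [PartialOrder 𝕜]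
    [StarRing 𝕜] [AddLeftMono 𝕜]
    {Λ K : Matrix n n 𝕜} (hΛ : Λ.PosDef) (hK : K.PosSemidef) : IsUnit (1 + Λ * K) := by
  have hfactor : 1 + Λ * K = Λ * (Λ⁻¹ + K) := by
    rw [Matrix.mul_add, Matrix.mul_nonsing_inv Λ ((Matrix.isUnit_iff_isUnit_det Λ).mp hΛ.isUnit)]
  rw [hfactor]
  exact hΛ.isUnit.mul (hΛ.inv.add_posSemidef hK).isUnit

theorem Matrix.sub_mul_inv_one_add_mul_mul_mul {m R : Type*} [CommRing R]
    (A : Matrix m n R) {Λ K : Matrix n n R} (h : IsUnit (1 + Λ * K)) :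
    (A - A * (1 + Λ * K)⁻¹ * Λ * K) * Λ = A * (1 + Λ * K)⁻¹ * Λ := by
  have hinv : (1 + Λ * K)⁻¹ * (1 + Λ * K) = 1 :=
    Matrix.nonsing_inv_mul _ ((Matrix.isUnit_iff_isUnit_det _).mp h)
  calc (A - A * (1 + Λ * K)⁻¹ * Λ * K) * Λ
      = A * Λ - A * (1 + Λ * K)⁻¹ * (Λ + Λ * K * Λ) + A * (1 + Λ * K)⁻¹ * Λ := by
        simp only [Matrix.sub_mul, Matrix.mul_add, Matrix.mul_assoc]; abel
    _ = A * (1 + Λ * K)⁻¹ * Λ := by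
        rw [show Λ + Λ * K * Λ = (1 + Λ * K) * Λ by
          rw [Matrix.add_mul, Matrix.one_mul], ← Matrix.mul_assoc, Matrix.mul_assoc A, hinv,
          Matrix.mul_one, sub_self, zero_add]

end MatrixIdentities

section InnerProduct

variable {d : ℕ} {μ : Measure (Fin d → ℝ)}

theorem muInner_comm (p q : MvPolynomial (Fin d) ℝ) : muInner μ p q = muInner μ q p := by
  simp only [muInner, mul_comm]

theorem muInner_smul_left (c : ℝ) (p q : MvPolynomial (Fin d) ℝ) :
    muInner μ (c • p) q = c * muInner μ p q := by
  simp only [muInner, smul_eval, mul_assoc, integral_const_mul]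

variable (hint : ∀ p q : MvPolynomial (Fin d) ℝ, Integrable (fun x => eval x p * eval x q) μ)
include hint

theorem muInner_add_left (p₁ p₂ q : MvPolynomial (Fin d) ℝ) :
    muInner μ (p₁ + p₂) q = muInner μ p₁ q + muInner μ p₂ q := by
  simp only [muInner, map_add, add_mul]
  exact integral_add (hint p₁ q) (hint p₂ q)

theorem muInner_sub_left (p₁ p₂ q : MvPolynomial (Fin d) ℝ) :
    muInner μ (p₁ - p₂) q = muInner μ p₁ q - muInner μ p₂ q := by
  simp only [muInner, map_sub, sub_mul]
  exact integral_sub (hint p₁ q) (hint p₂ q)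

theorem muInner_sum_left {ι : Type*} (s : Finset ι) (f : ι → MvPolynomial (Fin d) ℝ)
    (q : MvPolynomial (Fin d) ℝ) : muInner μ (∑ i ∈ s, f i) q = ∑ i ∈ s, muInner μ (f i) q := by
  simp only [muInner, map_sum, Finset.sum_mul]
  exact integral_finsetSum s fun i _ => hint (f i) q

end InnerProduct

theorem restrictTotalDegree_le_piDegLT {d m n : ℕ} (h : m < n) :
    restrictTotalDegree (Fin d) ℝ m ≤ piDegLT d n := by
  obtain ⟨n, rfl⟩ : ∃ n', n = n' + 1 := ⟨n - 1, by omega⟩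
  intro p hp
  rw [mem_restrictTotalDegree] at hp
  exact (mem_restrictTotalDegree _ _ _).2 (by omega)

section KernelMatrix

variable {d N : ℕ} {r : ℕ → ℕ} {P : (n : ℕ) → Fin (r n) → MvPolynomial (Fin d) ℝ}
  {ξ : Fin N → (Fin d → ℝ)}

theorem eval_kerPolyM1 (n : ℕ) (i j : Fin N) :
    eval (ξ j) (kerPolyM1 r P n (ξ i)) = bigKm1 r P ξ n i j := by
  cases n with
  | zero => simp [kerPolyM1, bigKm1]
  | succ n => simp [kerPolyM1, kerPoly, bigKm1, bigK, Kmu, map_sum, smul_eval]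

theorem bigK_eq_sum (n : ℕ) :
    bigK r P ξ n = ∑ j ∈ Finset.range (n + 1), (Pmat r P ξ j)ᴴ * Pmat r P ξ j := by
  ext a b
  simp [bigK, Kmu, Pmat, Matrix.sum_apply, Matrix.mul_apply]

theorem bigKm1_posSemidef (n : ℕ) : (bigKm1 r P ξ n).PosSemidef := by
  cases n with
  | zero => exact Matrix.PosSemidef.zero
  | succ n =>
    rw [bigKm1, bigK_eq_sum]
    exact Finset.sum_induction _ _ (fun _ _ hA hB => hA.add hB) Matrix.PosSemidef.zero
      fun j _ => Matrix.posSemidef_conjTranspose_mul_self _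

end KernelMatrix

section OrthonormalSystem

variable {d : ℕ} {μ : Measure (Fin d → ℝ)} {r : ℕ → ℕ}
  {P : (n : ℕ) → Fin (r n) → MvPolynomial (Fin d) ℝ}
  (hint : ∀ p q : MvPolynomial (Fin d) ℝ, Integrable (fun x => eval x p * eval x q) μ)
  (hdeg : ∀ n k, P n k ∈ restrictTotalDegree (Fin d) ℝ n)
  (horth : ∀ n k, ∀ q ∈ piDegLT d n, muInner μ (P n k) q = 0)
  (honb : ∀ n (k l : Fin (r n)), muInner μ (P n k) (P n l) = if k = l then 1 else 0)
  (hspan : ∀ n, restrictTotalDegree (Fin d) ℝ n ≤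
    Submodule.span ℝ {p | ∃ j, j ≤ n ∧ ∃ k, p = P j k})

include hdeg horth in
theorem muInner_P_of_ne {j j' : ℕ} (h : j ≠ j') (k : Fin (r j)) (k' : Fin (r j')) :
    muInner μ (P j k) (P j' k') = 0 := by
  rcases h.lt_or_gt with hlt | hgt
  · rw [muInner_comm]
    exact horth j' k' _ (restrictTotalDegree_le_piDegLT hlt (hdeg j k))
  · exact horth j k _ (restrictTotalDegree_le_piDegLT hgt (hdeg j' k'))

include hint hdeg horth honb in
theorem muInner_kerPoly_P {n j : ℕ} (hj : j ≤ n) (x : Fin d → ℝ) (k : Fin (r j)) :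
    muInner μ (kerPoly r P n x) (P j k) = eval x (P j k) := by
  rw [kerPoly, muInner_sum_left hint, Finset.sum_eq_single j]
  · simp [muInner_sum_left hint, muInner_smul_left, honb]
  · intro j' _ hj'
    simp [muInner_sum_left hint, muInner_smul_left, muInner_P_of_ne hdeg horth hj']
  · simp only [Finset.mem_range]
    omega

include hint hdeg horth honb hspan in
theorem muInner_kerPoly {n : ℕ} (x : Fin d → ℝ) {q : MvPolynomial (Fin d) ℝ}
    (hq : q ∈ restrictTotalDegree (Fin d) ℝ n) :
    muInner μ (kerPoly r P n x) q = eval x q := by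
  have hq_span := hspan n hq
  clear hq
  induction hq_span using Submodule.span_induction with
  | mem p hp =>
    obtain ⟨j, hj, k, rfl⟩ := hp
    exact muInner_kerPoly_P hint hdeg horth honb hj x k
  | zero => simp [muInner]
  | add p₁ p₂ _ _ h₁ h₂ =>
    rw [muInner_comm, muInner_add_left hint, muInner_comm p₁, muInner_comm p₂, h₁, h₂, map_add]
  | smul c p _ h =>
    rw [muInner_comm, muInner_smul_left, muInner_comm, h, smul_eval]

include hint hdeg horth honb hspan in
theorem muInner_kerPolyM1 {n : ℕ} (x : Fin d → ℝ) {q : MvPolynomial (Fin d) ℝ}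
    (hq : q ∈ piDegLT d n) : muInner μ (kerPolyM1 r P n x) q = eval x q := by
  cases n with
  | zero =>
    obtain rfl : q = 0 := (Submodule.mem_bot ℝ).mp hq
    simp [kerPolyM1, muInner]
  | succ n => exact muInner_kerPoly hint hdeg horth honb hspan x hq

include hdeg in
theorem kerPolyM1_mem_piDegLT (n : ℕ) (x : Fin d → ℝ) : kerPolyM1 r P n x ∈ piDegLT d n := by
  cases n with
  | zero => exact Submodule.zero_mem _
  | succ n =>
    rw [kerPolyM1, kerPoly]
    refine Submodule.sum_mem _ fun j hj => Submodule.sum_mem _ fun k _ => Submodule.smul_mem _ _ ?_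
    exact restrictTotalDegree_le_piDegLT (Finset.mem_range.mp hj) (hdeg j k)

variable {N : ℕ} {ξ : Fin N → (Fin d → ℝ)} {n : ℕ} (M : Matrix (Fin (r n)) (Fin N) ℝ)
  (k : Fin (r n))

include hdeg in
theorem sub_sum_smul_kerPolyM1_sub_mem_piDegLT :
    (P n k - ∑ i, M k i • kerPolyM1 r P n (ξ i)) - P n k ∈ piDegLT d n := by
  rw [sub_sub_cancel_left]
  exact Submodule.neg_mem _ <| Submodule.sum_mem _ fun i _ =>
    Submodule.smul_mem _ _ (kerPolyM1_mem_piDegLT hdeg n (ξ i))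

include hint hdeg horth honb hspan in
theorem nuInner_sub_sum_smul_kerPolyM1 (Λ : Matrix (Fin N) (Fin N) ℝ)
    {q : MvPolynomial (Fin d) ℝ} (hq : q ∈ piDegLT d n) :
    nuInner μ ξ Λ (P n k - ∑ i, M k i • kerPolyM1 r P n (ξ i)) q =
      (((Pmat r P ξ n - M * bigKm1 r P ξ n) * Λ - M) *ᵥ fun i => eval (ξ i) q) k := by
  have hmu : muInner μ (P n k - ∑ i, M k i • kerPolyM1 r P n (ξ i)) q =
      -(M *ᵥ fun i => eval (ξ i) q) k := by
    simp [muInner_sub_left hint, muInner_sum_left hint, muInner_smul_left, horth n k q hq,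
      muInner_kerPolyM1 hint hdeg horth honb hspan _ hq, Matrix.mulVec, dotProduct]
  have hnodes : (fun j => eval (ξ j) (P n k - ∑ i, M k i • kerPolyM1 r P n (ξ i))) =
      (Pmat r P ξ n - M * bigKm1 r P ξ n) k := by
    ext j
    simp [map_sum, smul_eval, eval_kerPolyM1, Pmat, Matrix.mul_apply]
  rw [nuInner, hmu, hnodes, Matrix.sub_mulVec, ← Matrix.mulVec_mulVec]
  simp only [Pi.sub_apply, Matrix.mulVec, dotProduct]
  ring

end OrthonormalSystem

theorem Qpoly_is_orthogonal_system_general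
    {d N : ℕ}
    (μ : Measure (Fin d → ℝ))
    (hint : ∀ p q : MvPolynomial (Fin d) ℝ,
      Integrable (fun x => eval x p * eval x q) μ)
    (r : ℕ → ℕ)
    (P : (n : ℕ) → Fin (r n) → MvPolynomial (Fin d) ℝ)
    (hdeg : ∀ n k, P n k ∈ MvPolynomial.restrictTotalDegree (Fin d) ℝ n)
    (horth : ∀ n k, ∀ q ∈ piDegLT d n, muInner μ (P n k) q = 0)
    (honb : ∀ n (k l : Fin (r n)), muInner μ (P n k) (P n l) = if k = l then 1 else 0)
    (hspan : ∀ n, MvPolynomial.restrictTotalDegree (Fin d) ℝ n ≤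
      Submodule.span ℝ {p | ∃ j, j ≤ n ∧ ∃ k, p = P j k})
    (ξ : Fin N → (Fin d → ℝ))
    (Λ : Matrix (Fin N) (Fin N) ℝ) (hΛ : Λ.PosDef) :
    ∀ n (k : Fin (r n)),
      (Qpoly r P ξ Λ n k - P n k ∈ piDegLT d n) ∧
      (∀ q ∈ piDegLT d n, nuInner μ ξ Λ (Qpoly r P ξ Λ n k) q = 0) := by
  intro n k
  refine ⟨sub_sum_smul_kerPolyM1_sub_mem_piDegLT hdeg _ k, fun q hq => ?_⟩
  have hunit : IsUnit (1 + Λ * bigKm1 r P ξ n) :=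
    Matrix.isUnit_one_add_mul_of_posDef_of_posSemidef hΛ (bigKm1_posSemidef n)
  rw [Qpoly, nuInner_sub_sum_smul_kerPolyM1 hint hdeg horth honb hspan _ k Λ hq,
    Matrix.sub_mul_inv_one_add_mul_mul_mul _ hunit]
  simp

/-- The polynomials `ℚ_n` defined by
`ℚ_0 = ℙ_0`, `ℚ_n(x) = ℙ_n(x) − 𝖯_n(ξ)(I_N + Λ 𝐊_{n−1})^{−1} Λ 𝕂_{n−1}(ξ, x)` have entries
differing from those of `ℙ_n` by polynomials in `Π_{n-1}^d`, and every entry of `ℚ_n`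
is `⟨·,·⟩_ν`-orthogonal to `Π_{n-1}^d`; hence `{ℚ_n}` is an OPS for `⟨·,·⟩_ν`. -/
theorem Qpoly_is_orthogonal_system
    {d N : ℕ} (hd : 1 ≤ d) (hN : 1 ≤ N)
    (μ : Measure (Fin d → ℝ))
    (hint : ∀ p q : MvPolynomial (Fin d) ℝ,
      Integrable (fun x => eval x p * eval x q) μ)
    (hpos : ∀ p : MvPolynomial (Fin d) ℝ, p ≠ 0 → 0 < ∫ x, (eval x p) ^ 2 ∂μ)
    (r : ℕ → ℕ) (hr : ∀ n, r n = Nat.choose (n + d - 1) n)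
    (P : (n : ℕ) → Fin (r n) → MvPolynomial (Fin d) ℝ)
    (hdeg : ∀ n k, P n k ∈ MvPolynomial.restrictTotalDegree (Fin d) ℝ n)
    (horth : ∀ n k, ∀ q ∈ piDegLT d n, muInner μ (P n k) q = 0)
    (honb : ∀ n (k l : Fin (r n)), muInner μ (P n k) (P n l) = if k = l then 1 else 0)
    (hspan : ∀ n, MvPolynomial.restrictTotalDegree (Fin d) ℝ n ≤
      Submodule.span ℝ {p | ∃ j, j ≤ n ∧ ∃ k, p = P j k})
    (ξ : Fin N → (Fin d → ℝ)) (hξ : Function.Injective ξ)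
    (Λ : Matrix (Fin N) (Fin N) ℝ) (hΛ : Λ.PosDef) :
    ∀ n (k : Fin (r n)),
      (Qpoly r P ξ Λ n k - P n k ∈ piDegLT d n) ∧
      (∀ q ∈ piDegLT d n, nuInner μ ξ Λ (Qpoly r P ξ Λ n k) q = 0) :=
  Qpoly_is_orthogonal_system_general μ hint r P hdeg horth honb hspan ξ Λ hΛ
end
end

section
/- For every n ≥ 0 and all x, y ∈ ℝ^d, K_n(dν; x, y) = K_n(dμ; x, y) − 𝕂_n(ξ,x)^T (I_N + Λ 𝐊_n)^{−1} Λ 𝕂_n(ξ,y). -/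
open MeasureTheory MvPolynomial Matrix Finset

noncomputable section

/-- The space `Π_n^d` of real polynomials in `d` variables of total degree `≤ n`. -/
def piDeg (d n : ℕ) : Submodule ℝ (MvPolynomial (Fin d) ℝ) :=
  MvPolynomial.restrictTotalDegree (Fin d) ℝ n

/-- The matrix `𝐊_n = (K_n(dμ; ξ_i, ξ_j))_{i,j=1}^N` built from a kernel `K`. -/
def bigKmat {d N : ℕ} (ξ : Fin N → (Fin d → ℝ))
    (K : ℕ → (Fin d → ℝ) → MvPolynomial (Fin d) ℝ) (n : ℕ) :
    Matrix (Fin N) (Fin N) ℝ :=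
  Matrix.of fun i j => eval (ξ j) (K n (ξ i))

/-- The column vector `𝕂_n(ξ, x) = (K_n(dμ; ξ_1, x), …, K_n(dμ; ξ_N, x))^T`. -/
def vecKmat {d N : ℕ} (ξ : Fin N → (Fin d → ℝ))
    (K : ℕ → (Fin d → ℝ) → MvPolynomial (Fin d) ℝ) (n : ℕ) (x : Fin d → ℝ) :
    Fin N → ℝ :=
  fun i => eval x (K n (ξ i))

/-!
Since `⟨·,·⟩_ν` is definite on polynomials, its reproducing kernel is the unique element of
`Π_n^d` with the reproducing property, so it suffices to exhibit one. The ansatz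
`K_n(dμ; y, ·) - ∑ᵢ aᵢ K_n(dμ; ξᵢ, ·)` reproduces `⟨·,·⟩_ν` exactly when
`(I + Λ 𝐊_n) a = Λ 𝕂_n(ξ, y)`. This system is solvable because `I + Λ 𝐊_n = Λ (Λ⁻¹ + 𝐊_n)`
and `𝐊_n`, a Gram matrix of the positive semidefinite form `⟨·,·⟩_μ`, is positive semidefinite.
Evaluating at `x` and using the symmetry of both kernels gives the formula.
-/

theorem Matrix.PosDef.isUnit_one_add_mul {ι : Type*} [Fintype ι] [DecidableEq ι]
    {Λ K : Matrix ι ι ℝ} (hΛ : Λ.PosDef) (hK : K.PosSemidef) : IsUnit (1 + Λ * K) := by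
  have hΛdet : IsUnit Λ.det := (isUnit_iff_isUnit_det Λ).mp hΛ.isUnit
  have hfactor : 1 + Λ * K = Λ * (Λ⁻¹ + K) := by rw [mul_add, mul_nonsing_inv Λ hΛdet]
  rw [hfactor]
  exact hΛ.isUnit.mul (hΛ.inv.add_posSemidef hK).isUnit

namespace MvPolynomial

variable {σ ι : Type*}

def evalVec (ξ : ι → σ → ℝ) : MvPolynomial σ ℝ →ₗ[ℝ] ι → ℝ :=
  LinearMap.pi fun i => (aeval (ξ i)).toLinearMap

@[simp]
theorem evalVec_apply (ξ : ι → σ → ℝ) (p : MvPolynomial σ ℝ) (i : ι) :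
    evalVec ξ p i = eval (ξ i) p :=
  rfl

section PointEvalForm

variable [Fintype ι] [DecidableEq ι]

def pointEvalForm (ξ : ι → σ → ℝ) (Λ : Matrix ι ι ℝ) :
    LinearMap.BilinForm ℝ (MvPolynomial σ ℝ) :=
  (toBilin' Λ).compl₁₂ (evalVec ξ) (evalVec ξ)

theorem pointEvalForm_apply (ξ : ι → σ → ℝ) (Λ : Matrix ι ι ℝ) (p q : MvPolynomial σ ℝ) :
    pointEvalForm ξ Λ p q = evalVec ξ p ⬝ᵥ Λ *ᵥ evalVec ξ q :=
  toBilin'_apply' _ _ _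

theorem pointEvalForm_isSymm {Λ : Matrix ι ι ℝ} (hΛ : Λ.IsSymm) (ξ : ι → σ → ℝ) :
    (pointEvalForm ξ Λ).IsSymm where
  eq p q := by
    rw [pointEvalForm_apply, pointEvalForm_apply, dotProduct_comm, dotProduct_mulVec,
      ← vecMul_transpose, hΛ.eq]

theorem pointEvalForm_isPosSemidef {Λ : Matrix ι ι ℝ} (hΛ : Λ.PosSemidef) (ξ : ι → σ → ℝ) :
    (pointEvalForm ξ Λ).IsPosSemidef where
  isSymm := pointEvalForm_isSymm (isHermitian_iff_isSymm.mp hΛ.isHermitian) ξ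
  nonneg p := by simpa [pointEvalForm_apply] using hΛ.dotProduct_mulVec_nonneg (evalVec ξ p)

end PointEvalForm

section IntegralForm

variable (μ : Measure (σ → ℝ))
  (hint : ∀ p q : MvPolynomial σ ℝ, Integrable (fun x => eval x p * eval x q) μ)

def integralForm : LinearMap.BilinForm ℝ (MvPolynomial σ ℝ) :=
  LinearMap.mk₂ ℝ (fun p q => ∫ x, eval x p * eval x q ∂μ)
    (fun p₁ p₂ q => by simp only [map_add, add_mul]; exact integral_add (hint _ _) (hint _ _))
    (fun c p q => by simp only [smul_eval, mul_assoc, smul_eq_mul]; exact integral_const_mul c _)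
    (fun p q₁ q₂ => by simp only [map_add, mul_add]; exact integral_add (hint _ _) (hint _ _))
    (fun c p q => by
      simp only [smul_eval, mul_left_comm _ c, smul_eq_mul]; exact integral_const_mul c _)

@[simp]
theorem integralForm_apply (p q : MvPolynomial σ ℝ) :
    integralForm μ hint p q = ∫ x, eval x p * eval x q ∂μ :=
  rfl

theorem integralForm_isPosSemidef : (integralForm μ hint).IsPosSemidef where
  eq p q := by simp only [integralForm_apply, mul_comm]
  nonneg p := integral_nonneg fun x => mul_self_nonneg _

end IntegralForm

structure IsReproducingKernel (B : LinearMap.BilinForm ℝ (MvPolynomial σ ℝ))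
    (S : Submodule ℝ (MvPolynomial σ ℝ)) (K : (σ → ℝ) → MvPolynomial σ ℝ) : Prop where
  mem : ∀ x, K x ∈ S
  apply_left : ∀ x, ∀ p ∈ S, B (K x) p = eval x p

def kernelMatrix (K : (σ → ℝ) → MvPolynomial σ ℝ) (ξ : ι → σ → ℝ) : Matrix ι ι ℝ :=
  of fun i j => eval (ξ j) (K (ξ i))

def kernelVec (K : (σ → ℝ) → MvPolynomial σ ℝ) (ξ : ι → σ → ℝ) (x : σ → ℝ) : ι → ℝ :=
  fun i => eval x (K (ξ i))

theorem evalVec_sum_smul [Fintype ι] (K : (σ → ℝ) → MvPolynomial σ ℝ) (ξ : ι → σ → ℝ)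
    (a : ι → ℝ) : evalVec ξ (∑ i, a i • K (ξ i)) = a ᵥ* kernelMatrix K ξ := by
  ext j
  simp [vecMul, dotProduct, kernelMatrix]

def perturbedKernel [Fintype ι] [DecidableEq ι] (K : (σ → ℝ) → MvPolynomial σ ℝ)
    (ξ : ι → σ → ℝ) (Λ : Matrix ι ι ℝ) (y : σ → ℝ) : MvPolynomial σ ℝ :=
  K y - ∑ i, (((1 + Λ * kernelMatrix K ξ)⁻¹ * Λ) *ᵥ kernelVec K ξ y) i • K (ξ i)

namespace IsReproducingKernel

variable {B : LinearMap.BilinForm ℝ (MvPolynomial σ ℝ)} {S : Submodule ℝ (MvPolynomial σ ℝ)}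
  {K : (σ → ℝ) → MvPolynomial σ ℝ}

theorem eval_comm (hK : IsReproducingKernel B S K) (hB : B.IsSymm) (x y : σ → ℝ) :
    eval y (K x) = eval x (K y) := by
  rw [← hK.apply_left y _ (hK.mem x), hB.eq, hK.apply_left x _ (hK.mem y)]

theorem unique {K' : (σ → ℝ) → MvPolynomial σ ℝ} (hK : IsReproducingKernel B S K)
    (hK' : IsReproducingKernel B S K') (hB : ∀ q ∈ S, B q q = 0 → q = 0) : K = K' := by
  funext x
  have hq : K x - K' x ∈ S := S.sub_mem (hK.mem x) (hK'.mem x)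
  refine sub_eq_zero.mp (hB _ hq ?_)
  rw [LinearMap.map_sub₂, hK.apply_left x _ hq, hK'.apply_left x _ hq, sub_self]

theorem evalVec_eq_kernelVec (hK : IsReproducingKernel B S K) (hB : B.IsSymm) (ξ : ι → σ → ℝ)
    (y : σ → ℝ) : evalVec ξ (K y) = kernelVec K ξ y := by
  ext i
  exact hK.eval_comm hB y (ξ i)

theorem kernelMatrix_isSymm (hK : IsReproducingKernel B S K) (hB : B.IsSymm) (ξ : ι → σ → ℝ) :
    (kernelMatrix K ξ).IsSymm :=
  IsSymm.ext fun i j => hK.eval_comm hB (ξ j) (ξ i)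

variable [Fintype ι]

theorem apply_sum_smul_left (hK : IsReproducingKernel B S K) (ξ : ι → σ → ℝ) (a : ι → ℝ)
    {p : MvPolynomial σ ℝ} (hp : p ∈ S) : B (∑ i, a i • K (ξ i)) p = a ⬝ᵥ evalVec ξ p := by
  simp [dotProduct, LinearMap.sum_apply, hK.apply_left _ p hp]

theorem posSemidef_kernelMatrix (hK : IsReproducingKernel B S K) (hB : B.IsPosSemidef)
    (ξ : ι → σ → ℝ) : (kernelMatrix K ξ).PosSemidef := by
  have hsymm := hK.kernelMatrix_isSymm hB.isSymm ξ
  refine .of_dotProduct_mulVec_nonneg (isHermitian_iff_isSymm.mpr hsymm) fun v => ?_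
  have hq : ∑ i, v i • K (ξ i) ∈ S := S.sum_mem fun i _ => S.smul_mem _ (hK.mem _)
  have := hB.nonneg (∑ i, v i • K (ξ i))
  rwa [hK.apply_sum_smul_left ξ v hq, evalVec_sum_smul, ← hsymm.eq, vecMul_transpose] at this

variable [DecidableEq ι]

theorem add_pointEvalForm_apply_sub_sum_smul (hK : IsReproducingKernel B S K) (hB : B.IsSymm)
    {ξ : ι → σ → ℝ} {Λ : Matrix ι ι ℝ} (hΛ : Λ.IsSymm) {y : σ → ℝ} {a : ι → ℝ}
    (ha : (1 + Λ * kernelMatrix K ξ) *ᵥ a = Λ *ᵥ kernelVec K ξ y)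
    {p : MvPolynomial σ ℝ} (hp : p ∈ S) :
    (B + pointEvalForm ξ Λ) (K y - ∑ i, a i • K (ξ i)) p = eval y p := by
  have hΛeval : Λ *ᵥ evalVec ξ (K y - ∑ i, a i • K (ξ i)) = a := by
    rw [map_sub, evalVec_sum_smul, hK.evalVec_eq_kernelVec hB, ← (hK.kernelMatrix_isSymm hB ξ).eq,
      vecMul_transpose, mulVec_sub, ← ha, add_mulVec, one_mulVec, mulVec_mulVec,
      add_sub_cancel_right]
  rw [LinearMap.add_apply, LinearMap.add_apply, (pointEvalForm_isSymm hΛ ξ).eq,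
    pointEvalForm_apply, hΛeval, LinearMap.map_sub₂, hK.apply_left y p hp,
    hK.apply_sum_smul_left ξ a hp, dotProduct_comm]
  ring

theorem add_pointEvalForm (hK : IsReproducingKernel B S K) (hB : B.IsPosSemidef)
    (ξ : ι → σ → ℝ) {Λ : Matrix ι ι ℝ} (hΛ : Λ.PosDef) :
    IsReproducingKernel (B + pointEvalForm ξ Λ) S (perturbedKernel K ξ Λ) where
  mem y := S.sub_mem (hK.mem y) (S.sum_mem fun i _ => S.smul_mem _ (hK.mem _))
  apply_left y p hp := by
    have hunit := hΛ.isUnit_one_add_mul (hK.posSemidef_kernelMatrix hB ξ)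
    refine hK.add_pointEvalForm_apply_sub_sum_smul hB.isSymm
      (isHermitian_iff_isSymm.mp hΛ.isHermitian) ?_ hp
    rw [mulVec_mulVec, mul_nonsing_inv_cancel_left _ _ ((isUnit_iff_isUnit_det _).mp hunit)]

theorem eval_perturbedKernel (hK : IsReproducingKernel B S K) (hB : B.IsSymm) (ξ : ι → σ → ℝ)
    (Λ : Matrix ι ι ℝ) (x y : σ → ℝ) :
    eval x (perturbedKernel K ξ Λ y) = eval y (K x) -
      kernelVec K ξ x ⬝ᵥ ((1 + Λ * kernelMatrix K ξ)⁻¹ * Λ) *ᵥ kernelVec K ξ y := by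
  rw [perturbedKernel, map_sub, hK.eval_comm hB, dotProduct_comm]
  simp [dotProduct, kernelVec]

end IsReproducingKernel

end MvPolynomial

theorem Kn_nu_formula_general
    {d N : ℕ}
    (μ : Measure (Fin d → ℝ))
    (hint : ∀ p q : MvPolynomial (Fin d) ℝ,
      Integrable (fun x => eval x p * eval x q) μ)
    (hpos : ∀ p : MvPolynomial (Fin d) ℝ, p ≠ 0 → 0 < ∫ x, (eval x p) ^ 2 ∂μ)
    (ξ : Fin N → (Fin d → ℝ))
    (Λ : Matrix (Fin N) (Fin N) ℝ) (hΛ : Λ.PosDef)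
    (Kmu : ℕ → (Fin d → ℝ) → MvPolynomial (Fin d) ℝ)
    (hKmuMem : ∀ n x, Kmu n x ∈ piDeg d n)
    (hKmuRep : ∀ n x, ∀ p ∈ piDeg d n, muInner μ (Kmu n x) p = eval x p)
    (Knu : ℕ → (Fin d → ℝ) → MvPolynomial (Fin d) ℝ)
    (hKnuMem : ∀ n x, Knu n x ∈ piDeg d n)
    (hKnuRep : ∀ n x, ∀ p ∈ piDeg d n, nuInner μ ξ Λ (Knu n x) p = eval x p)
    (n : ℕ) (x y : Fin d → ℝ) :
    eval y (Knu n x) =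
      eval y (Kmu n x) -
        vecKmat ξ Kmu n x ⬝ᵥ
          ((1 + Λ * bigKmat ξ Kmu n)⁻¹ * Λ).mulVec (vecKmat ξ Kmu n y) := by
  set B := integralForm μ hint
  set Bν := B + pointEvalForm ξ Λ
  have hBpsd : B.IsPosSemidef := integralForm_isPosSemidef μ hint
  have hPpsd := pointEvalForm_isPosSemidef hΛ.posSemidef ξ
  have hμ : IsReproducingKernel B (piDeg d n) (Kmu n) := ⟨hKmuMem n, hKmuRep n⟩
  have hν : IsReproducingKernel Bν (piDeg d n) (Knu n) :=
    ⟨hKnuMem n, fun x p hp => by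
      rw [← hKnuRep n x p hp, LinearMap.add_apply, LinearMap.add_apply, pointEvalForm_apply]
      rfl⟩
  have hνdef : ∀ q ∈ piDeg d n, Bν q q = 0 → q = 0 := by
    intro q _ hq
    by_contra hne
    have hBq : 0 < B q q := by simpa [B, pow_two] using hpos q hne
    have := hPpsd.nonneg q
    rw [LinearMap.add_apply, LinearMap.add_apply] at hq
    linarith
  have hKnu : Knu n = perturbedKernel (Kmu n) ξ Λ :=
    hν.unique (hμ.add_pointEvalForm hBpsd ξ hΛ) hνdef
  rw [hν.eval_comm (hBpsd.add hPpsd).isSymm, hKnu, hμ.eval_perturbedKernel hBpsd.isSymm]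
  rfl

/-- For every `n ≥ 0` and all `x, y ∈ ℝ^d`,
`K_n(dν; x, y) = K_n(dμ; x, y) − 𝕂_n(ξ,x)^T (I_N + Λ 𝐊_n)^{−1} Λ 𝕂_n(ξ,y)`. -/
theorem Kn_nu_formula
    {d N : ℕ} (hd : 1 ≤ d) (hN : 1 ≤ N)
    (μ : Measure (Fin d → ℝ))
    (hint : ∀ p q : MvPolynomial (Fin d) ℝ,
      Integrable (fun x => eval x p * eval x q) μ)
    (hpos : ∀ p : MvPolynomial (Fin d) ℝ, p ≠ 0 → 0 < ∫ x, (eval x p) ^ 2 ∂μ)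
    (ξ : Fin N → (Fin d → ℝ)) (hξ : Function.Injective ξ)
    (Λ : Matrix (Fin N) (Fin N) ℝ) (hΛ : Λ.PosDef)
    (Kmu : ℕ → (Fin d → ℝ) → MvPolynomial (Fin d) ℝ)
    (hKmuMem : ∀ n x, Kmu n x ∈ piDeg d n)
    (hKmuRep : ∀ n x, ∀ p ∈ piDeg d n, muInner μ (Kmu n x) p = eval x p)
    (Knu : ℕ → (Fin d → ℝ) → MvPolynomial (Fin d) ℝ)
    (hKnuMem : ∀ n x, Knu n x ∈ piDeg d n)
    (hKnuRep : ∀ n x, ∀ p ∈ piDeg d n, nuInner μ ξ Λ (Knu n x) p = eval x p)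
    (n : ℕ) (x y : Fin d → ℝ) :
    eval y (Knu n x) =
      eval y (Kmu n x) -
        vecKmat ξ Kmu n x ⬝ᵥ
          ((1 + Λ * bigKmat ξ Kmu n)⁻¹ * Λ).mulVec (vecKmat ξ Kmu n y) :=
  Kn_nu_formula_general μ hint hpos ξ Λ hΛ Kmu hKmuMem hKmuRep Knu hKnuMem hKnuRep n x y
end
end

section
/- For every n ≥ 0 and all x, y ∈ T^d, K_n(dν; x, y) = K_n(W_κ; x, y) − [M / (1 + M(A_n − B_n))] Σ_{i=1}^{d+1} K_n(W_κ; x, e_i) K_n(W_κ; y, e_i) + [M² B_n / ((1 + M(A_n − B_n)) (1 + M A_n + d M B_n))] · (Σ_{i=1}^{d+1} K_n(W_κ; x, e_i)) · (Σ_{i=1}^{d+1} K_n(W_κ; y, e_i)). -/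
open MeasureTheory MvPolynomial Finset Filter Topology

noncomputable section

/-- The standard simplex `T^d = {x : x_i ≥ 0, 1 - x_1 - ⋯ - x_d ≥ 0}`. -/
def simplexT (d : ℕ) : Set (Fin d → ℝ) :=
  {x | (∀ i, 0 ≤ x i) ∧ ∑ i, x i ≤ 1}

/-- The barycentric coordinates `x_1, …, x_d, 1 - |x|_1` of a point of `ℝ^d`. -/
def bary {d : ℕ} (x : Fin d → ℝ) (i : Fin (d + 1)) : ℝ :=
  if h : (i : ℕ) < d then x ⟨i, h⟩ else 1 - ∑ j, x j

/-- The vertices `e_1, …, e_d` (standard basis) and `e_{d+1} = 0` of `T^d`. -/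
def vertex (d : ℕ) (i : Fin (d + 1)) : Fin d → ℝ :=
  fun j => if (j : ℕ) = (i : ℕ) then 1 else 0

/-- The Jacobi weight
`W_κ(x) = x_1^{κ_1-1/2} ⋯ x_d^{κ_d-1/2} (1-|x|_1)^{κ_{d+1}-1/2}` on `T^d`. -/
def jacobiW {d : ℕ} (κ : Fin (d + 1) → ℝ) (x : Fin d → ℝ) : ℝ :=
  ∏ i, bary x i ^ (κ i - 1 / 2)

/-- The normalizing constant `w_κ = Γ(|κ| + (d+1)/2) / (Γ(κ_1+1/2)⋯Γ(κ_{d+1}+1/2))`. -/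
def wConst {d : ℕ} (κ : Fin (d + 1) → ℝ) : ℝ :=
  Real.Gamma ((∑ i, κ i) + (d + 1) / 2) / ∏ i, Real.Gamma (κ i + 1 / 2)

/-- The inner product `⟨f, g⟩ = w_κ ∫_{T^d} f g W_κ dx`. -/
def simpInner {d : ℕ} (κ : Fin (d + 1) → ℝ) (f g : MvPolynomial (Fin d) ℝ) : ℝ :=
  wConst κ * ∫ x in simplexT d, eval x f * eval x g * jacobiW κ x

/-- The Pochhammer symbol `(a)_n = a (a+1) ⋯ (a+n-1)`. -/
def pochh (a : ℝ) (n : ℕ) : ℝ := ∏ j ∈ Finset.range n, (a + j)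

/-- The generalized binomial coefficient `C(x, m) = x (x-1) ⋯ (x-m+1) / m!`. -/
def genBinom (x : ℝ) (m : ℕ) : ℝ :=
  (∏ j ∈ Finset.range m, (x - (j : ℝ))) / m.factorial

/-- The Jacobi polynomial
`P_n^{(a,b)}(t) = Σ_{k=0}^n C(n+a, n-k) C(n+b, k) ((t-1)/2)^k ((t+1)/2)^{n-k}`. -/
def jacobiP (a b : ℝ) (n : ℕ) (t : ℝ) : ℝ :=
  ∑ k ∈ Finset.range (n + 1),
    genBinom (n + a) (n - k) * genBinom (n + b) k *
      ((t - 1) / 2) ^ k * ((t + 1) / 2) ^ (n - k)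

/-- The inner product `⟨f, g⟩_ν = w_κ ∫_{T^d} f g W_κ dx + M Σ_{i=1}^{d+1} f(e_i) g(e_i)`. -/
def simpInnerNu {d : ℕ} (κ : Fin (d + 1) → ℝ) (M : ℝ)
    (f g : MvPolynomial (Fin d) ℝ) : ℝ :=
  simpInner κ f g + M * ∑ i, eval (vertex d i) f * eval (vertex d i) g

/-!
Subtracting the two reproducing properties gives
`K_n(dν; x, y) = K_n(x, y) - M Σ_i K_n(dν; x, e_i) K_n(e_i, y)`.
Taking `y = e_j` turns this into a linear system for the vertex values of `K_n(dν; x, ·)`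
whose matrix `(1 + M(A_n - B_n)) I + M B_n J` (with `J` the all-ones matrix) is inverted
explicitly. Its two eigenvalues `1 + M(A_n - B_n)` and `1 + M A_n + d M B_n` cannot vanish,
since the system is solvable for `x = e_1`, where its right-hand side is
`A_n e_1 + B_n Σ_{j≠1} e_j`.
-/

lemma simpInner_comm {d : ℕ} (κ : Fin (d + 1) → ℝ) (f g : MvPolynomial (Fin d) ℝ) :
    simpInner κ f g = simpInner κ g f := by
  simp only [simpInner, mul_comm (eval _ f) (eval _ g)]

lemma sum_mul_ite_eq {ι : Type*} [Fintype ι] [DecidableEq ι] (c : ι → ℝ) (j : ι) (A B : ℝ) :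
    ∑ i, c i * (if i = j then A else B) = c j * (A - B) + B * ∑ i, c i := by
  have h (i : ι) :
      c i * (if i = j then A else B) = (if i = j then c i * (A - B) else 0) + c i * B := by
    split_ifs <;> ring
  simp only [h, sum_add_distrib, sum_ite_eq', mem_univ, if_true, ← sum_mul, mul_comm B]

section Reproducing

variable {σ : Type*} (S : Submodule ℝ (MvPolynomial σ ℝ))
  (ip : MvPolynomial σ ℝ → MvPolynomial σ ℝ → ℝ)

def IsReproducingKernel (K : (σ → ℝ) → MvPolynomial σ ℝ) : Prop :=
  ∀ x, K x ∈ S ∧ ∀ p ∈ S, ip (K x) p = eval x p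

variable {S ip}

lemma IsReproducingKernel.eval_comm (hsymm : ∀ f g, ip f g = ip g f)
    {K : (σ → ℝ) → MvPolynomial σ ℝ} (hK : IsReproducingKernel S ip K) (x y : σ → ℝ) :
    eval y (K x) = eval x (K y) := by
  rw [← (hK y).2 _ (hK x).1, ← (hK x).2 _ (hK y).1, hsymm]

lemma IsReproducingKernel.eval_eq_sub_of_add_point_masses {ι : Type*} [Fintype ι]
    (hsymm : ∀ f g, ip f g = ip g f) (M : ℝ) (e : ι → σ → ℝ)
    {K L : (σ → ℝ) → MvPolynomial σ ℝ} (hK : IsReproducingKernel S ip K)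
    (hL : IsReproducingKernel S (fun f g => ip f g + M * ∑ i, eval (e i) f * eval (e i) g) L)
    (x y : σ → ℝ) :
    eval y (L x) = eval y (K x) - M * ∑ i, eval (e i) (L x) * eval (e i) (K y) := by
  have hLK := (hL x).2 _ (hK y).1
  rw [← (hK y).2 _ (hL x).1, hsymm, hK.eval_comm hsymm x y]
  simp only at hLK
  linarith

end Reproducing

section VertexSystem

variable {d : ℕ} {M A B : ℝ} {u v : Fin (d + 1) → ℝ}

lemma vertexSystem_of_eq_sub
    (h : ∀ j, u j = v j - M * ∑ i, u i * (if i = j then A else B)) (j : Fin (d + 1)) :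
    (1 + M * (A - B)) * u j + M * B * ∑ i, u i = v j := by
  have hj := h j
  rw [sum_mul_ite_eq] at hj
  linear_combination hj

variable (hsys : ∀ j, (1 + M * (A - B)) * u j + M * B * ∑ i, u i = v j)
include hsys

lemma sum_eq_of_vertexSystem : (1 + M * A + d * M * B) * ∑ i, u i = ∑ i, v i := by
  rw [← sum_congr rfl fun j _ => hsys j, sum_add_distrib, ← mul_sum, sum_const, card_univ,
    Fintype.card_fin, nsmul_eq_mul]
  push_cast
  ring

lemma one_add_mul_sub_ne_zero_of_vertexSystem {i j : Fin (d + 1)}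
    (hv : v i - v j = A - B) : 1 + M * (A - B) ≠ 0 := by
  intro h0
  have hi := hsys i
  have hj := hsys j
  rw [h0, zero_mul, zero_add] at hi hj
  have hAB : A = B := by linarith
  simp [hAB] at h0

lemma one_add_mul_add_ne_zero_of_vertexSystem (hv : ∑ i, v i = A + d * B) :
    1 + M * A + d * M * B ≠ 0 := by
  intro h0
  have hsum := sum_eq_of_vertexSystem hsys
  rw [h0, zero_mul, hv] at hsum
  exact one_ne_zero (by linear_combination h0 + M * hsum : (1 : ℝ) = 0)

lemma mul_sum_mul_eq_of_vertexSystem (hD1 : 1 + M * (A - B) ≠ 0)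
    (hD2 : 1 + M * A + d * M * B ≠ 0) (w : Fin (d + 1) → ℝ) :
    M * ∑ i, u i * w i =
      M / (1 + M * (A - B)) * ∑ i, v i * w i -
        M ^ 2 * B / ((1 + M * (A - B)) * (1 + M * A + d * M * B)) *
          (∑ i, v i) * ∑ i, w i := by
  have hvw (i : Fin (d + 1)) :
      v i * w i = (1 + M * (A - B)) * (u i * w i) + M * B * (∑ k, u k) * w i := by
    rw [← hsys i]
    ring
  have hSu : ∑ i, u i = (∑ i, v i) / (1 + M * A + d * M * B) := by
    rw [eq_div_iff hD2, mul_comm, sum_eq_of_vertexSystem hsys]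
  have hSuw : ∑ i, u i * w i =
      (∑ i, v i * w i - M * B * (∑ i, u i) * ∑ i, w i) / (1 + M * (A - B)) := by
    rw [eq_div_iff hD1]
    simp only [hvw, sum_add_distrib, ← mul_sum]
    ring
  rw [hSuw, hSu]
  field_simp

end VertexSystem

theorem kernel_nu_simplex_formula_general
    {d : ℕ} (hd : 1 ≤ d) (ς : ℝ) (M : ℝ)
    (Kmu : ℕ → (Fin d → ℝ) → MvPolynomial (Fin d) ℝ)
    (hKmuMem : ∀ n x, Kmu n x ∈ piDeg d n)
    (hKmuRep : ∀ n x, ∀ p ∈ piDeg d n,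
      simpInner (fun _ : Fin (d + 1) => ς) (Kmu n x) p = eval x p)
    (Knu : ℕ → (Fin d → ℝ) → MvPolynomial (Fin d) ℝ)
    (hKnuMem : ∀ n x, Knu n x ∈ piDeg d n)
    (hKnuRep : ∀ n x, ∀ p ∈ piDeg d n,
      simpInnerNu (fun _ : Fin (d + 1) => ς) M (Knu n x) p = eval x p)
    (A B : ℕ → ℝ)
    (hA : ∀ n (i : Fin (d + 1)), eval (vertex d i) (Kmu n (vertex d i)) = A n)
    (hB : ∀ n (i j : Fin (d + 1)), i ≠ j →
      eval (vertex d j) (Kmu n (vertex d i)) = B n)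
    (n : ℕ) (x : Fin d → ℝ)
    (y : Fin d → ℝ) :
    eval y (Knu n x) =
      eval y (Kmu n x) -
        (M / (1 + M * (A n - B n))) *
          ∑ i, eval (vertex d i) (Kmu n x) * eval (vertex d i) (Kmu n y) +
        (M ^ 2 * B n /
            ((1 + M * (A n - B n)) * (1 + M * A n + d * M * B n))) *
          (∑ i, eval (vertex d i) (Kmu n x)) *
          (∑ i, eval (vertex d i) (Kmu n y)) := by
  have key := IsReproducingKernel.eval_eq_sub_of_add_point_masses (simpInner_comm _) M
    (vertex d) (fun x => ⟨hKmuMem n x, hKmuRep n x⟩) (fun x => ⟨hKnuMem n x, hKnuRep n x⟩)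
  have gram (i j : Fin (d + 1)) :
      eval (vertex d i) (Kmu n (vertex d j)) = if i = j then A n else B n := by
    split_ifs with h
    · exact h ▸ hA n i
    · exact hB n j i (Ne.symm h)
  have hsys (x' : Fin d → ℝ) (j : Fin (d + 1)) :
      (1 + M * (A n - B n)) * eval (vertex d j) (Knu n x') +
        M * B n * ∑ i, eval (vertex d i) (Knu n x') = eval (vertex d j) (Kmu n x') :=
    vertexSystem_of_eq_sub (fun j => by simpa only [gram] using key x' (vertex d j)) j
  have hlast : (0 : Fin (d + 1)) ≠ Fin.last d := Fin.ne_of_lt hd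
  have hD1 := one_add_mul_sub_ne_zero_of_vertexSystem (hsys (vertex d 0)) (i := 0)
    (j := Fin.last d) (by simp [gram, hlast.symm])
  have hD2 := one_add_mul_add_ne_zero_of_vertexSystem (hsys (vertex d 0))
    (by simp [Fin.sum_univ_succ, gram])
  rw [key x y, mul_sum_mul_eq_of_vertexSystem (hsys x) hD1 hD2]
  ring

/-- For every `n ≥ 0` and all `x, y ∈ T^d`,
`K_n(dν; x, y) = K_n(W_κ; x, y)
  − [M/(1 + M(A_n − B_n))] Σ_i K_n(W_κ; x, e_i) K_n(W_κ; y, e_i)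
  + [M² B_n/((1 + M(A_n − B_n))(1 + M A_n + d M B_n))]
    (Σ_i K_n(W_κ; x, e_i)) (Σ_i K_n(W_κ; y, e_i))`. -/
theorem kernel_nu_simplex_formula
    {d : ℕ} (hd : 1 ≤ d) (ς : ℝ) (hς : 0 ≤ ς) (M : ℝ) (hM : 0 < M)
    (Kmu : ℕ → (Fin d → ℝ) → MvPolynomial (Fin d) ℝ)
    (hKmuMem : ∀ n x, Kmu n x ∈ piDeg d n)
    (hKmuRep : ∀ n x, ∀ p ∈ piDeg d n,
      simpInner (fun _ : Fin (d + 1) => ς) (Kmu n x) p = eval x p)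
    (Knu : ℕ → (Fin d → ℝ) → MvPolynomial (Fin d) ℝ)
    (hKnuMem : ∀ n x, Knu n x ∈ piDeg d n)
    (hKnuRep : ∀ n x, ∀ p ∈ piDeg d n,
      simpInnerNu (fun _ : Fin (d + 1) => ς) M (Knu n x) p = eval x p)
    (A B : ℕ → ℝ)
    (hA : ∀ n (i : Fin (d + 1)), eval (vertex d i) (Kmu n (vertex d i)) = A n)
    (hB : ∀ n (i j : Fin (d + 1)), i ≠ j →
      eval (vertex d j) (Kmu n (vertex d i)) = B n)
    (n : ℕ) (x : Fin d → ℝ) (hx : x ∈ simplexT d)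
    (y : Fin d → ℝ) (hy : y ∈ simplexT d) :
    eval y (Knu n x) =
      eval y (Kmu n x) -
        (M / (1 + M * (A n - B n))) *
          ∑ i, eval (vertex d i) (Kmu n x) * eval (vertex d i) (Kmu n y) +
        (M ^ 2 * B n /
            ((1 + M * (A n - B n)) * (1 + M * A n + d * M * B n))) *
          (∑ i, eval (vertex d i) (Kmu n x)) *
          (∑ i, eval (vertex d i) (Kmu n y)) :=
  kernel_nu_simplex_formula_general hd ς M Kmu hKmuMem hKmuRep Knu hKnuMem hKnuRep A B hA hB n x y
end
end
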